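/- Let P be a Markov decision process on finite nonempty state type S and finite nonempty action type A, and let T ⊆ S. Suppose v : S → ℝ satisfies v s ≥ 0 for all s, v s = 1 for all s ∈ T, and v s ≥ ∑_{s' ∈ S} P s a s' * v s' for every action a ∈ A and every s ∉ T. Then rmax n s ≤ v s for every n ∈ ℕ and every s ∈ S; consequently ⨆_n rmax n s ≤ v s. That is, any nonnegative vector that equals 1 on the target states and is superharmonic with respect to every action bounds the maximal reachability probabilities from above. -/

import Mathlib

/-- Bounded-horizon maximal reachability values of an MDP `P` w.r.t. target set `T`. -/
noncomputable def rmaxVal {S A : Type*} [Fintype S] [Fintype A] [Nonempty A]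
    (P : S → A → S → ℝ) (T : Set S) [DecidablePred (· ∈ T)] : ℕ → S → ℝ
  | 0, s => if s ∈ T then 1 else 0
  | n + 1, s => if s ∈ T then 1 else
      Finset.univ.sup' Finset.univ_nonempty fun a => ∑ s', P s a s' * rmaxVal P T n s'

section Superharmonic

variable {S A : Type*} [Fintype S] [Fintype A] [Nonempty A]
  {P : S → A → S → ℝ} {T : Set S} {v : S → ℝ}

theorem sup'_sum_mul_le_of_superharmonic (hP0 : ∀ s a s', 0 ≤ P s a s')
    (hvsup : ∀ (a : A), ∀ s ∉ T, (∑ s', P s a s' * v s') ≤ v s)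
    {w : S → ℝ} (hwv : ∀ s, w s ≤ v s) {s : S} (hs : s ∉ T) :
    Finset.univ.sup' Finset.univ_nonempty (fun a => ∑ s', P s a s' * w s') ≤ v s :=
  Finset.sup'_le _ _ fun a _ =>
    calc ∑ s', P s a s' * w s'
        ≤ ∑ s', P s a s' * v s' :=
          Finset.sum_le_sum fun s' _ => mul_le_mul_of_nonneg_left (hwv s') (hP0 s a s')
      _ ≤ v s := hvsup a s hs

theorem rmaxVal_le_of_superharmonic [DecidablePred (· ∈ T)] (hP0 : ∀ s a s', 0 ≤ P s a s')
    (hv0 : ∀ s, 0 ≤ v s) (hvT : ∀ s ∈ T, v s = 1)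
    (hvsup : ∀ (a : A), ∀ s ∉ T, (∑ s', P s a s' * v s') ≤ v s) :
    ∀ (n : ℕ) (s : S), rmaxVal P T n s ≤ v s
  | 0, s => by
    rw [rmaxVal]
    split_ifs with hs
    exacts [(hvT s hs).ge, hv0 s]
  | n + 1, s => by
    rw [rmaxVal]
    split_ifs with hs
    exacts [(hvT s hs).ge, sup'_sum_mul_le_of_superharmonic hP0 hvsup
      (rmaxVal_le_of_superharmonic hP0 hv0 hvT hvsup n) hs]

end Superharmonic

theorem superharmonic_upper_bound_rmax_general
    {S A : Type*} [Fintype S] [Fintype A] [Nonempty A]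
    (P : S → A → S → ℝ)
    (hP0 : ∀ s a s', 0 ≤ P s a s')
    (T : Set S) [DecidablePred (· ∈ T)]
    (v : S → ℝ)
    (hv0 : ∀ s, 0 ≤ v s)
    (hvT : ∀ s ∈ T, v s = 1)
    (hvsup : ∀ (a : A), ∀ s ∉ T, (∑ s', P s a s' * v s') ≤ v s) :
    (∀ (n : ℕ) (s : S), rmaxVal P T n s ≤ v s) ∧
    (∀ s : S, (⨆ n, rmaxVal P T n s) ≤ v s) := by
  have hbound := rmaxVal_le_of_superharmonic hP0 hv0 hvT hvsup
  exact ⟨hbound, fun s => ciSup_le fun n => hbound n s⟩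

/-- Any nonnegative vector that equals 1 on the target states and is superharmonic
with respect to every action bounds the maximal reachability probabilities from above. -/
theorem superharmonic_upper_bound_rmax
    {S A : Type*} [Fintype S] [Nonempty S] [Fintype A] [Nonempty A]
    (P : S → A → S → ℝ)
    (hP0 : ∀ s a s', 0 ≤ P s a s')
    (hP1 : ∀ s a, ∑ s', P s a s' = 1)
    (T : Set S) [DecidablePred (· ∈ T)]
    (v : S → ℝ)
    (hv0 : ∀ s, 0 ≤ v s)
    (hvT : ∀ s ∈ T, v s = 1)
    (hvsup : ∀ (a : A), ∀ s ∉ T, (∑ s', P s a s' * v s') ≤ v s) :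
    (∀ (n : ℕ) (s : S), rmaxVal P T n s ≤ v s) ∧
    (∀ s : S, (⨆ n, rmaxVal P T n s) ≤ v s) :=
  superharmonic_upper_bound_rmax_general P hP0 T v hv0 hvT hvsup
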